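/- The cardinality of R_{n,r}, the set of Moisil representable functions L_n^r → L_n, equals the product over all tuples a⃗ ∈ L_n^r of |{0, 1, a_1, ..., a_r, 1-a_1, ..., 1-a_r}|. -/

import Mathlib

/-- The underlying set of the standard LM_n-algebra: {0, 1/n, ..., (n-1)/n, 1} ⊆ ℚ. -/
def Ln (n : ℕ) : Set ℚ := {x | ∃ j : ℕ, j ≤ n ∧ x = (j : ℚ) / n}

/-- The Chrysippian endomorphism Δ_i on ℚ: on L_n, Δ_i(j/n) = 1 iff i + j ≥ n + 1. -/
def Delta (n i : ℕ) (x : ℚ) : ℚ := if (n : ℚ) + 1 ≤ (i : ℚ) + x * n then 1 else 0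

/-- Terms in the signature (∨, ∧, N, 0, 1, Δ_1, ..., Δ_n) over variables x_1, ..., x_r. -/
inductive LMTerm (r : ℕ) where
  | var (i : Fin r)
  | zero
  | one
  | neg (t : LMTerm r)
  | sup (t u : LMTerm r)
  | inf (t u : LMTerm r)
  | delta (i : ℕ) (t : LMTerm r)

/-- Evaluation of a term in the standard LM_n-algebra under a valuation φ. -/
def LMTerm.eval (n : ℕ) {r : ℕ} (φ : Fin r → ℚ) : LMTerm r → ℚ
  | .var i => φ i
  | .zero => 0
  | .one => 1
  | .neg t => 1 - t.eval n φ
  | .sup t u => max (t.eval n φ) (u.eval n φ)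
  | .inf t u => min (t.eval n φ) (u.eval n φ)
  | .delta i t => Delta n i (t.eval n φ)

/-- A function is Moisil representable if some term evaluates to it under
every valuation into L_n. -/
def Representable (n r : ℕ) (f : (Fin r → ℚ) → ℚ) : Prop :=
  ∃ t : LMTerm r, ∀ φ : Fin r → ℚ, (∀ i, φ i ∈ Ln n) → t.eval n φ = f φ

/-- The set {0, 1, a_1, ..., a_r, 1 - a_1, ..., 1 - a_r}. -/
def Mset (r : ℕ) (a : Fin r → ℚ) : Set ℚ :=
  {x | x = 0 ∨ x = 1 ∨ ∃ i : Fin r, x = a i ∨ x = 1 - a i}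

/-- Tuples (a_1, ..., a_r) ∈ L_n^r. -/
def DTup (n r : ℕ) := {a : Fin r → ℚ // ∀ i, a i ∈ Ln n}

/-- Representability for functions defined on L_n^r. -/
def RepD (n r : ℕ) (f : DTup n r → ℚ) : Prop :=
  ∃ t : LMTerm r, ∀ a : DTup n r, t.eval n a.1 = f a

/-- The tuple of rationals encoded by v : Fin r → Fin (n+1); these enumerate L_n^r. -/
def tupOf (n : ℕ) {r : ℕ} (v : Fin r → Fin (n + 1)) : Fin r → ℚ :=
  fun i => ((v i : ℕ) : ℚ) / n


/-!
A term evaluates at every tuple `a` to one of its atoms `0, 1, a_i, 1 - a_i`, because `N`, `∨`,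
`∧` and `Δ_i` map `Mset r a` into itself. Conversely `Δ_{n+1-j} x ∧ ¬ Δ_{n-j} x` is the indicator
of `x = j / n` on `L_n`, so meets of these give the indicator `χ_v` of each tuple `v`, and a join
of `χ_v ∧ s_v` over all `v` realises any choice of values `s_v(v) ∈ Mset r v`. Representable
functions are therefore exactly the elements of `∏_{a ∈ L_n^r} Mset r a`.
-/

lemma Ln_subset_Icc (n : ℕ) : Ln n ⊆ Set.Icc 0 1 := by
  rintro _ ⟨j, hj, rfl⟩
  exact ⟨by positivity, div_le_one_of_le₀ (by exact_mod_cast hj) n.cast_nonneg⟩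

lemma Mset_subset_Icc {r : ℕ} {a : Fin r → ℚ} (ha : ∀ i, a i ∈ Set.Icc 0 1) :
    Mset r a ⊆ Set.Icc 0 1 := by
  rintro _ (rfl | rfl | ⟨i, rfl | rfl⟩)
  · simp
  · simp
  · exact ha i
  · obtain ⟨h0, h1⟩ := ha i
    constructor <;> linarith

lemma Delta_natCast_div {n : ℕ} (hn : n ≠ 0) (m k : ℕ) :
    Delta n m ((k : ℚ) / n) = if n + 1 ≤ m + k then 1 else 0 := by
  have hk : (k : ℚ) / n * n = k := div_mul_cancel₀ _ (by exact_mod_cast hn)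
  simp only [Delta, hk]
  norm_cast

namespace LMTerm

variable {r : ℕ}

lemma eval_mem_Mset (n : ℕ) (t : LMTerm r) (φ : Fin r → ℚ) : t.eval n φ ∈ Mset r φ := by
  induction t with
  | var i => exact Or.inr (Or.inr ⟨i, Or.inl rfl⟩)
  | zero => exact Or.inl rfl
  | one => exact Or.inr (Or.inl rfl)
  | neg t ih =>
    simp only [eval]
    rcases ih with h | h | ⟨i, h | h⟩ <;> rw [h]
    · exact Or.inr (Or.inl (sub_zero 1))
    · exact Or.inl (sub_self 1)
    · exact Or.inr (Or.inr ⟨i, Or.inr rfl⟩)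
    · exact Or.inr (Or.inr ⟨i, Or.inl (sub_sub_cancel 1 _)⟩)
  | sup t u iht ihu =>
    simp only [eval]
    rcases max_choice (t.eval n φ) (u.eval n φ) with h | h <;> rw [h] <;> assumption
  | inf t u iht ihu =>
    simp only [eval]
    rcases min_choice (t.eval n φ) (u.eval n φ) with h | h <;> rw [h] <;> assumption
  | delta i t =>
    simp only [eval, Delta]
    split
    · exact Or.inr (Or.inl rfl)
    · exact Or.inl rfl

lemma exists_eval_eq_of_mem_Mset (n : ℕ) {a : Fin r → ℚ} {c : ℚ} (hc : c ∈ Mset r a) :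
    ∃ t : LMTerm r, t.eval n a = c := by
  rcases hc with rfl | rfl | ⟨i, rfl | rfl⟩
  exacts [⟨zero, rfl⟩, ⟨one, rfl⟩, ⟨var i, rfl⟩, ⟨neg (var i), rfl⟩]

def supList : List (LMTerm r) → LMTerm r
  | [] => zero
  | t :: l => sup t (supList l)

def infList : List (LMTerm r) → LMTerm r
  | [] => one
  | t :: l => inf t (infList l)

variable {n : ℕ} {φ : Fin r → ℚ}

lemma le_eval_supList {t : LMTerm r} {l : List (LMTerm r)} (ht : t ∈ l) :
    t.eval n φ ≤ (supList l).eval n φ := by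
  induction l with
  | nil => simp at ht
  | cons u l ih =>
    rcases List.mem_cons.mp ht with rfl | ht
    · exact le_max_left _ _
    · exact (ih ht).trans (le_max_right _ _)

lemma eval_supList_le {l : List (LMTerm r)} {c : ℚ} (hc : 0 ≤ c)
    (hl : ∀ t ∈ l, t.eval n φ ≤ c) : (supList l).eval n φ ≤ c := by
  induction l with
  | nil => exact hc
  | cons u l ih =>
    exact max_le (hl u List.mem_cons_self) (ih fun t ht => hl t (List.mem_cons_of_mem u ht))

lemma eval_infList_map_indicator {ι : Type*} (T : ι → LMTerm r) (P : ι → Prop)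
    [DecidablePred P] (l : List ι) (hT : ∀ i ∈ l, (T i).eval n φ = if P i then 1 else 0) :
    (infList (l.map T)).eval n φ = if ∀ i ∈ l, P i then 1 else 0 := by
  induction l with
  | nil => simp [infList, eval]
  | cons i l ih =>
    simp only [List.map_cons, infList, eval, List.forall_mem_cons]
    rw [hT i List.mem_cons_self, ih fun j hj => hT j (List.mem_cons_of_mem i hj)]
    split_ifs <;> simp_all

/-- `Δ_{n+1-j} x_i ∧ ¬ Δ_{n-j} x_i`, the indicator of `x_i = j / n` on `L_n`. -/
def indicatorCoord (n : ℕ) (i : Fin r) (j : Fin (n + 1)) : LMTerm r :=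
  inf (delta (n + 1 - j) (var i)) (neg (delta (n - j) (var i)))

def indicatorTup (n : ℕ) (v : Fin r → Fin (n + 1)) : LMTerm r :=
  infList ((List.finRange r).map fun i => indicatorCoord n i (v i))

lemma eval_indicatorCoord (hn : n ≠ 0) (i : Fin r) (j : Fin (n + 1)) (w : Fin r → Fin (n + 1)) :
    (indicatorCoord n i j).eval n (tupOf n w) = if w i = j then 1 else 0 := by
  simp only [indicatorCoord, eval, tupOf, Delta_natCast_div hn, Fin.ext_iff]
  have hj := j.is_le
  split_ifs <;> norm_num <;> omega

lemma eval_indicatorTup (hn : n ≠ 0) (v w : Fin r → Fin (n + 1)) :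
    (indicatorTup n v).eval n (tupOf n w) = if w = v then 1 else 0 := by
  rw [indicatorTup, eval_infList_map_indicator _ (fun i => w i = v i) _
    fun i _ => eval_indicatorCoord hn i (v i) w]
  simp [funext_iff]

end LMTerm

open LMTerm

lemma tupOf_mem (n : ℕ) {r : ℕ} (v : Fin r → Fin (n + 1)) (i : Fin r) : tupOf n v i ∈ Ln n :=
  ⟨v i, (v i).is_le, rfl⟩

lemma tupOf_injective {n : ℕ} (hn : n ≠ 0) (r : ℕ) : Function.Injective (tupOf n (r := r)) := by
  intro v w h
  funext i
  have hi := congrFun h i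
  rw [tupOf, tupOf, div_left_inj' (Nat.cast_ne_zero.mpr hn : (n : ℚ) ≠ 0), Nat.cast_inj] at hi
  exact Fin.ext hi

lemma exists_tupOf_eq {n r : ℕ} (a : DTup n r) : ∃ v, tupOf n v = a.1 := by
  choose k hk hka using a.2
  exact ⟨fun i => ⟨k i, Nat.lt_succ_of_le (hk i)⟩, funext fun i => (hka i).symm⟩

noncomputable def tupOfEquiv {n : ℕ} (hn : n ≠ 0) (r : ℕ) : (Fin r → Fin (n + 1)) ≃ DTup n r :=
  Equiv.ofBijective (fun v => ⟨tupOf n v, tupOf_mem n v⟩)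
    ⟨fun _ _ h => tupOf_injective hn r (congrArg Subtype.val h),
      fun a => (exists_tupOf_eq a).imp fun _ => Subtype.ext⟩

lemma coe_tupOfEquiv {n : ℕ} (hn : n ≠ 0) {r : ℕ} (v : Fin r → Fin (n + 1)) :
    (tupOfEquiv hn r v).1 = tupOf n v :=
  rfl

lemma repD_of_forall_mem_Mset {n r : ℕ} (hn : n ≠ 0) {g : DTup n r → ℚ}
    (hg : ∀ a, g a ∈ Mset r a.1) : RepD n r g := by
  let e := tupOfEquiv hn r
  choose s hs using fun v => exists_eval_eq_of_mem_Mset n (hg (e v))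
  refine ⟨supList ((Finset.univ.toList).map fun v => inf (indicatorTup n v) (s v)), fun a => ?_⟩
  obtain ⟨w, rfl⟩ := e.surjective a
  have hg01 := Mset_subset_Icc (fun i => Ln_subset_Icc n ((e w).2 i)) (hg (e w))
  have hdisj : ∀ v, (inf (indicatorTup n v) (s v)).eval n (e w).1 ≤ g (e w) := by
    intro v
    rw [coe_tupOfEquiv, eval, eval_indicatorTup hn]
    split_ifs with hwv
    · exact (min_le_right _ _).trans_eq (hwv ▸ hs w)
    · exact (min_le_left _ _).trans hg01.1
  have hw : (inf (indicatorTup n w) (s w)).eval n (e w).1 = g (e w) := by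
    rw [eval, ← hs w, coe_tupOfEquiv, eval_indicatorTup hn, if_pos rfl, min_eq_right]
    exact hs w ▸ hg01.2
  refine le_antisymm (eval_supList_le hg01.1 ?_) (hw ▸ le_eval_supList ?_)
  · simpa using hdisj
  · exact List.mem_map_of_mem (Finset.mem_toList.mpr (Finset.mem_univ w))

lemma repD_iff {n r : ℕ} (hn : n ≠ 0) (f : DTup n r → ℚ) :
    RepD n r f ↔ ∀ a, f a ∈ Mset r a.1 :=
  ⟨fun ⟨t, ht⟩ a => ht a ▸ eval_mem_Mset n t a.1, repD_of_forall_mem_Mset hn⟩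

theorem card_representable_general (n r : ℕ) (hn : 2 ≤ n) :
    Nat.card {f : DTup n r → ℚ // RepD n r f} =
      ∏ v : Fin r → Fin (n + 1), (Mset r (tupOf n v)).ncard := by
  have hn0 : n ≠ 0 := by omega
  calc Nat.card {f : DTup n r → ℚ // RepD n r f}
      = Nat.card ((a : DTup n r) → Mset r a.1) :=
        Nat.card_congr ((Equiv.subtypeEquivRight (repD_iff hn0)).trans Equiv.subtypePiEquivPi)
    _ = Nat.card ((v : Fin r → Fin (n + 1)) → Mset r (tupOf n v)) :=
        Nat.card_congr (Equiv.piCongrLeft (fun a : DTup n r => Mset r a.1) (tupOfEquiv hn0 r)).symm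
    _ = ∏ v : Fin r → Fin (n + 1), (Mset r (tupOf n v)).ncard := by
        simp only [Nat.card_pi, Nat.card_coe_set_eq]

/-- The cardinality of R_{n,r} equals the product, over all tuples a⃗ ∈ L_n^r,
of the size of {0, 1, a_1, ..., a_r, 1-a_1, ..., 1-a_r}. -/
theorem card_representable (n r : ℕ) (hn : 2 ≤ n) (hr : 1 ≤ r) :
    Nat.card {f : DTup n r → ℚ // RepD n r f} =
      ∏ v : Fin r → Fin (n + 1), (Mset r (tupOf n v)).ncard :=
  card_representable_general n r hn
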